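/- In the Dinkelbach iteration x^{k+1} ∈ argmin_{‖x‖_p = 1} ( r^k ‖x‖_∞ − I(x) ), r^{k+1} = F(x^{k+1}), the sequence (r^k) converges to the global maximum r_max = max_{x ∈ ℝ^n \setminus \{0\}} F(x), for any initial x^0 ≠ 0. -/

import Mathlib

open Finset Filter Topology
open scoped ENNReal

noncomputable def Ifun {n : ℕ} (w : Fin n → Fin n → ℝ) (x : Fin n → ℝ) : ℝ :=
  (1 / 2) * ∑ i, ∑ j, w i j * |x i - x j|

noncomputable def pnorm {n : ℕ} (p : ℝ≥0∞) (x : Fin n → ℝ) : ℝ :=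
  if p = ⊤ then ‖x‖ else (∑ i, |x i| ^ p.toReal) ^ (1 / p.toReal)

lemma aux_toReal {p : ℝ≥0∞} (hp : 1 ≤ p) (h : ¬ p = ⊤) : 1 ≤ p.toReal := by
  have := ENNReal.toReal_mono h hp
  simpa using this

lemma Ifun_smul {n : ℕ} (w : Fin n → Fin n → ℝ) (c : ℝ) (y : Fin n → ℝ) :
    Ifun w (c • y) = |c| * Ifun w y := by
  unfold Ifun
  have h : ∀ i j : Fin n, w i j * |(c • y) i - (c • y) j| = |c| * (w i j * |y i - y j|) := by
    intro i j
    simp only [Pi.smul_apply, smul_eq_mul]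
    rw [← mul_sub, abs_mul]; ring
  simp_rw [h, ← Finset.mul_sum]
  ring

lemma Ifun_nonneg {n : ℕ} (w : Fin n → Fin n → ℝ) (hnn : ∀ i j, 0 ≤ w i j)
    (y : Fin n → ℝ) : 0 ≤ Ifun w y := by
  unfold Ifun
  have : 0 ≤ ∑ i, ∑ j, w i j * |y i - y j| :=
    Finset.sum_nonneg fun i _ => Finset.sum_nonneg fun j _ =>
      mul_nonneg (hnn i j) (abs_nonneg _)
  linarith

lemma Ifun_le {n : ℕ} (w : Fin n → Fin n → ℝ) (hnn : ∀ i j, 0 ≤ w i j)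
    (y : Fin n → ℝ) : Ifun w y ≤ (∑ i, ∑ j, w i j) * ‖y‖ := by
  unfold Ifun
  have h : ∀ i j : Fin n, w i j * |y i - y j| ≤ w i j * (2 * ‖y‖) := by
    intro i j
    apply mul_le_mul_of_nonneg_left _ (hnn i j)
    have hi := norm_le_pi_norm y i
    have hj := norm_le_pi_norm y j
    simp only [Real.norm_eq_abs] at hi hj
    have h2 : |y i - y j| ≤ |y i| + |y j| := by
      have := abs_add_le (y i) (-(y j))
      simpa [sub_eq_add_neg] using this
    linarith
  calc (1/2 : ℝ) * ∑ i, ∑ j, w i j * |y i - y j|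
      ≤ (1/2 : ℝ) * ∑ i, ∑ j, w i j * (2 * ‖y‖) := by
        apply mul_le_mul_of_nonneg_left _ (by norm_num)
        exact Finset.sum_le_sum fun i _ => Finset.sum_le_sum fun j _ => h i j
    _ = (∑ i, ∑ j, w i j) * ‖y‖ := by
        simp_rw [← Finset.sum_mul]
        ring

lemma pnorm_smul {n : ℕ} {p : ℝ≥0∞} (hp : 1 ≤ p) {c : ℝ} (hc : 0 ≤ c) (y : Fin n → ℝ) :
    pnorm p (c • y) = c * pnorm p y := by
  unfold pnorm
  split_ifs with h
  · rw [norm_smul, Real.norm_eq_abs, abs_of_nonneg hc]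
  · have ht := aux_toReal hp h
    have ht0 : p.toReal ≠ 0 := by linarith
    have hterm : ∀ i : Fin n, |(c • y) i| ^ p.toReal = c ^ p.toReal * |y i| ^ p.toReal := by
      intro i
      simp only [Pi.smul_apply, smul_eq_mul]
      rw [abs_mul, abs_of_nonneg hc, Real.mul_rpow hc (abs_nonneg _)]
    simp_rw [hterm, ← Finset.mul_sum]
    rw [Real.mul_rpow (Real.rpow_nonneg hc _)
      (Finset.sum_nonneg fun i _ => Real.rpow_nonneg (abs_nonneg _) _),
      ← Real.rpow_mul hc, mul_one_div, div_self ht0, Real.rpow_one]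

lemma norm_le_pnorm {n : ℕ} {p : ℝ≥0∞} (hp : 1 ≤ p) (y : Fin n → ℝ) :
    ‖y‖ ≤ pnorm p y := by
  unfold pnorm
  split_ifs with h
  · exact le_refl _
  · have ht := aux_toReal hp h
    have ht0 : p.toReal ≠ 0 := by linarith
    have hS : 0 ≤ ∑ i, |y i| ^ p.toReal :=
      Finset.sum_nonneg fun i _ => Real.rpow_nonneg (abs_nonneg _) _
    rw [pi_norm_le_iff_of_nonneg (Real.rpow_nonneg hS _)]
    intro i
    rw [Real.norm_eq_abs]
    have h1 : |y i| ^ p.toReal ≤ ∑ j, |y j| ^ p.toReal :=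
      Finset.single_le_sum (fun j _ => Real.rpow_nonneg (abs_nonneg _) _) (Finset.mem_univ i)
    have h2 : (|y i| ^ p.toReal) ^ (1 / p.toReal) ≤ (∑ j, |y j| ^ p.toReal) ^ (1 / p.toReal) :=
      Real.rpow_le_rpow (Real.rpow_nonneg (abs_nonneg _) _) h1 (by positivity)
    calc |y i| = (|y i| ^ p.toReal) ^ (1 / p.toReal) := by
          rw [← Real.rpow_mul (abs_nonneg _), mul_one_div, div_self ht0, Real.rpow_one]
      _ ≤ _ := h2

lemma pnorm_pos {n : ℕ} {p : ℝ≥0∞} (hp : 1 ≤ p) {y : Fin n → ℝ} (hy : y ≠ 0) :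
    0 < pnorm p y :=
  lt_of_lt_of_le (norm_pos_iff.mpr hy) (norm_le_pnorm hp y)

lemma ne_zero_of_pnorm_one {n : ℕ} {p : ℝ≥0∞} (hp : 1 ≤ p) {y : Fin n → ℝ}
    (hy : pnorm p y = 1) : y ≠ 0 := by
  intro h0
  subst h0
  rw [show ((0 : Fin n → ℝ)) = ((0:ℝ) • (0 : Fin n → ℝ)) by simp, pnorm_smul hp le_rfl] at hy
  simp at hy

/-- Dinkelbach iteration: `(r^k)` converges to the global maximum of `F`. -/
theorem stmt5 {n : ℕ} (w : Fin n → Fin n → ℝ)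
    (hsym : ∀ i j, w i j = w j i) (hnn : ∀ i j, 0 ≤ w i j)
    (p : ℝ≥0∞) (hp : 1 ≤ p)
    (x : ℕ → Fin n → ℝ) (r : ℕ → ℝ)
    (hx0 : x 0 ≠ 0)
    (hr : ∀ k, r k = Ifun w (x k) / ‖x k‖)
    (hmin : ∀ k, pnorm p (x (k + 1)) = 1 ∧
      ∀ y : Fin n → ℝ, pnorm p y = 1 →
        r k * ‖x (k + 1)‖ - Ifun w (x (k + 1)) ≤ r k * ‖y‖ - Ifun w y) :
    Tendsto r atTop
      (𝓝 (sSup {c : ℝ | ∃ y : Fin n → ℝ, y ≠ 0 ∧ c = Ifun w y / ‖y‖})) := by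
  classical
  set S : Set ℝ := {c : ℝ | ∃ y : Fin n → ℝ, y ≠ 0 ∧ c = Ifun w y / ‖y‖} with hS
  -- every iterate is nonzero
  have hxk : ∀ k, x k ≠ 0 := by
    intro k
    cases k with
    | zero => exact hx0
    | succ m => exact ne_zero_of_pnorm_one hp (hmin m).1
  have hnx : ∀ k, (0:ℝ) < ‖x k‖ := fun k => norm_pos_iff.mpr (hxk k)
  have hrS : ∀ k, r k ∈ S := fun k => ⟨x k, hxk k, hr k⟩
  have hSne : S.Nonempty := ⟨r 0, hrS 0⟩
  have hSbdd : BddAbove S := by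
    refine ⟨∑ i, ∑ j, w i j, ?_⟩
    rintro c ⟨y, hy, rfl⟩
    have hny : (0:ℝ) < ‖y‖ := norm_pos_iff.mpr hy
    rw [div_le_iff₀ hny]
    exact Ifun_le w hnn y
  -- I(x k) = r k * ‖x k‖
  have hIx : ∀ k, Ifun w (x k) = r k * ‖x k‖ := by
    intro k
    rw [hr k, div_mul_cancel₀ _ (ne_of_gt (hnx k))]
  -- ‖x (k+1)‖ ≤ 1
  have hle1 : ∀ k, ‖x (k + 1)‖ ≤ 1 := by
    intro k
    calc ‖x (k+1)‖ ≤ pnorm p (x (k+1)) := norm_le_pnorm hp _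
      _ = 1 := (hmin k).1
  -- monotonicity
  have hmono : Monotone r := by
    apply monotone_nat_of_le_succ
    intro k
    set d := (pnorm p (x k))⁻¹ with hd
    have hdpos : (0:ℝ) < d := inv_pos.mpr (pnorm_pos hp (hxk k))
    have hy1 : pnorm p (d • x k) = 1 := by
      rw [pnorm_smul hp hdpos.le, hd, inv_mul_cancel₀ (ne_of_gt (pnorm_pos hp (hxk k)))]
    have hkey := (hmin k).2 (d • x k) hy1
    have hnorm : ‖d • x k‖ = d * ‖x k‖ := by
      rw [norm_smul, Real.norm_eq_abs, abs_of_nonneg hdpos.le]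
    rw [hnorm, Ifun_smul, abs_of_nonneg hdpos.le, hIx k] at hkey
    have hkey2 : r k * ‖x (k + 1)‖ - Ifun w (x (k + 1)) ≤ 0 := by nlinarith
    rw [hr (k+1), le_div_iff₀ (hnx (k+1))]
    linarith
  have hbdd : BddAbove (Set.range r) :=
    ⟨sSup S, by rintro _ ⟨k, rfl⟩; exact le_csSup hSbdd (hrS k)⟩
  set L : ℝ := ⨆ k, r k with hL
  have hT : Tendsto r atTop (𝓝 L) := tendsto_atTop_ciSup hmono hbdd
  have hT1 : Tendsto (fun k => r (k + 1)) atTop (𝓝 L) :=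
    hT.comp (tendsto_add_atTop_nat 1)
  have hLle : L ≤ sSup S := ciSup_le fun k => le_csSup hSbdd (hrS k)
  have hleL : sSup S ≤ L := by
    apply csSup_le hSne
    rintro c ⟨y, hy, rfl⟩
    have hny : (0:ℝ) < ‖y‖ := norm_pos_iff.mpr hy
    set d := (pnorm p y)⁻¹ with hd
    have hdpos : (0:ℝ) < d := inv_pos.mpr (pnorm_pos hp hy)
    have hy1 : pnorm p (d • y) = 1 := by
      rw [pnorm_smul hp hdpos.le, hd, inv_mul_cancel₀ (ne_of_gt (pnorm_pos hp hy))]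
    have hnormy : ‖d • y‖ = d * ‖y‖ := by
      rw [norm_smul, Real.norm_eq_abs, abs_of_nonneg hdpos.le]
    have hnypos : (0:ℝ) < ‖d • y‖ := by rw [hnormy]; positivity
    have hIy : Ifun w (d • y) = (Ifun w y / ‖y‖) * ‖d • y‖ := by
      rw [Ifun_smul, abs_of_nonneg hdpos.le, hnormy]
      field_simp
    have hineq : ∀ k, r k - r (k + 1) ≤ ‖d • y‖ * (r k - Ifun w y / ‖y‖) := by
      intro k
      have hkey := (hmin k).2 (d • y) hy1
      rw [hIy, hIx (k+1)] at hkey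
      have h1 : ‖x (k+1)‖ * (r k - r (k+1)) ≤ ‖d • y‖ * (r k - Ifun w y / ‖y‖) := by
        nlinarith
      have h2 : r k - r (k+1) ≤ ‖x (k+1)‖ * (r k - r (k+1)) := by
        have hm : r k ≤ r (k+1) := hmono (Nat.le_succ k)
        nlinarith [hnx (k+1), hle1 k]
      linarith
    have hf : Tendsto (fun k => r k - r (k + 1)) atTop (𝓝 0) := by
      have := hT.sub hT1
      simpa using this
    have hg : Tendsto (fun k => ‖d • y‖ * (r k - Ifun w y / ‖y‖)) atTop
        (𝓝 (‖d • y‖ * (L - Ifun w y / ‖y‖))) :=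
      ((hT.sub tendsto_const_nhds).const_mul _)
    have h0 : (0:ℝ) ≤ ‖d • y‖ * (L - Ifun w y / ‖y‖) :=
      le_of_tendsto_of_tendsto' hf hg hineq
    nlinarith
  have : sSup S = L := le_antisymm hleL hLle
  rw [this]
  exact hT
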